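/- Let m ≥ 1 and c_1,…,c_m ∈ ℂ. Suppose w, w' : ℤ^m → ℂ both vanish at every f ∈ ℤ^m that is not dominant (i.e. whenever f_1 ≥ f_2 ≥ … ≥ f_m ≥ 0 fails), both satisfy, for every dominant f ∈ ℤ^m and every 1 ≤ i ≤ m, the difference equation c_i·w(f) = Σ_{ε ∈ I_i} w(f+ε), and satisfy w(0,…,0) = w'(0,…,0). Then w = w'. -/

import Mathlib

/-- `f ∈ ℤ^m` is dominant: `f 0 ≥ f 1 ≥ … ≥ f (m-1) ≥ 0`. -/
def Dominant (m : ℕ) (f : Fin m → ℤ) : Prop :=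
  Antitone f ∧ ∀ j, 0 ≤ f j

/-- `I_i`: the set of `ε ∈ {0,1}^m ⊆ ℤ^m` with `Σ_j ε_j = i`. -/
def ISet (m i : ℕ) : Set (Fin m → ℤ) :=
  {ε | (∀ j, ε j = 0 ∨ ε j = 1) ∧ ∑ j, ε j = (i : ℤ)}

/-!
The system is linear, so it suffices that a solution `d` vanishing at `0` vanishes at every
dominant `f`; we induct on the weight `∑ⱼ (m - j) fⱼ`. If `f ≠ 0` has `k` positive entries, they
are the first `k`, so `g = f - 1_{[0,k)}` is dominant and lighter than `f`, and the `k`-th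
equation at `g` reads `c_k d(g) = d(f) + ∑_{ε ≠ 1_{[0,k)}} d(g + ε)`. Since `1_{[0,k)}` is the
unique heaviest `0/1`-vector with `k` ones, every `g + ε` in the last sum is lighter than `f` or
not dominant, so `d(f) = 0`.
-/

open Finset

theorem finsum_mem_eq_single {α M : Type*} [AddCommMonoid M] {s : Set α} {f : α → M} {a : α}
    (ha : a ∈ s) (h : ∀ x ∈ s, x ≠ a → f x = 0) : ∑ᶠ x ∈ s, f x = f a := by
  rw [finsum_mem_def, finsum_eq_single _ a, Set.indicator_of_mem ha]
  intro x hx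
  by_cases hxs : x ∈ s
  · rw [Set.indicator_of_mem hxs, h x hxs hx]
  · exact Set.indicator_of_notMem hxs f

theorem ISet_finite (m i : ℕ) : (ISet m i).Finite :=
  (Set.Finite.pi fun _ => Set.toFinite ({0, 1} : Set ℤ)).subset fun _ hε j _ => hε.1 j

section Weight

variable {m : ℕ}

def lowerIndicator (m k : ℕ) : Fin m → ℤ := fun j => if (j : ℕ) < k then 1 else 0

def weight (m : ℕ) (f : Fin m → ℤ) : ℤ := ∑ j : Fin m, ((m : ℤ) - j) * f j

theorem sum_lowerIndicator {k : ℕ} (hk : k ≤ m) : ∑ j, lowerIndicator m k j = k := by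
  simp [lowerIndicator, Fin.card_filter_val_lt, hk]

theorem lowerIndicator_mem_ISet {k : ℕ} (hk : k ≤ m) : lowerIndicator m k ∈ ISet m k :=
  ⟨fun j => by unfold lowerIndicator; split_ifs <;> simp, sum_lowerIndicator hk⟩

theorem weight_add (f g : Fin m → ℤ) : weight m (f + g) = weight m f + weight m g := by
  simp only [weight, Pi.add_apply, mul_add, sum_add_distrib]

theorem weight_lowerIndicator_pos {k : ℕ} (hk0 : 0 < k) (hk : k ≤ m) :
    0 < weight m (lowerIndicator m k) := by
  refine sum_pos' (fun j _ => ?_) ⟨⟨0, by omega⟩, mem_univ _, by simp [lowerIndicator, hk0]; omega⟩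
  unfold lowerIndicator
  split_ifs <;> simp only [mul_one, mul_zero] <;> omega

theorem weight_lt_weight_lowerIndicator {k : ℕ} (hk : k ≤ m) {ε : Fin m → ℤ}
    (hε : ε ∈ ISet m k) (hne : ε ≠ lowerIndicator m k) :
    weight m ε < weight m (lowerIndicator m k) := by
  set ε₀ := lowerIndicator m k
  have hsum : ∑ j, (ε₀ j - ε j) = 0 := by
    rw [sum_sub_distrib, sum_lowerIndicator hk, hε.2, sub_self]
  -- Shifting the weights `m - j` by the half-integer `m - k + 1/2` makes every term nonnegative.
  have hshift : 2 * (weight m ε₀ - weight m ε) = ∑ j, (2 * ((k : ℤ) - j) - 1) * (ε₀ j - ε j) := by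
    calc 2 * (weight m ε₀ - weight m ε)
        = ∑ j, (2 * ((k : ℤ) - j) - 1) * (ε₀ j - ε j)
          + (2 * ((m : ℤ) - k) + 1) * ∑ j, (ε₀ j - ε j) := by
          simp only [weight, mul_sum, ← sum_sub_distrib, ← sum_add_distrib]
          exact sum_congr rfl fun j _ => by ring
      _ = _ := by rw [hsum, mul_zero, add_zero]
  have hterm : ∀ j, 0 ≤ (2 * ((k : ℤ) - j) - 1) * (ε₀ j - ε j) ∧
      (ε j ≠ ε₀ j → 0 < (2 * ((k : ℤ) - j) - 1) * (ε₀ j - ε j)) := by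
    intro j
    rcases hε.1 j with h | h <;> by_cases hj : (j : ℕ) < k <;>
      simp [ε₀, lowerIndicator, h, hj] <;> omega
  obtain ⟨j, hj⟩ := Function.ne_iff.1 hne
  have := sum_pos' (fun j _ => (hterm j).1) ⟨j, mem_univ j, (hterm j).2 hj⟩
  linarith

end Weight

namespace Dominant

variable {m : ℕ} {f : Fin m → ℤ}

theorem weight_nonneg (hf : Dominant m f) : 0 ≤ weight m f :=
  sum_nonneg fun j _ => mul_nonneg (by omega) (hf.2 j)

theorem pos_iff_lt_card (hf : Dominant m f) (j : Fin m) : 0 < f j ↔ (j : ℕ) < #{i | 0 < f i} :=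
  (Fin.lt_card_filter_univ_iff_apply_of_imp (fun i => 0 < f i)
    fun _ _ hji hi => hi.trans_le (hf.1 hji)).symm

theorem sub_lowerIndicator (hf : Dominant m f) :
    Dominant m (f - lowerIndicator m #{i | 0 < f i}) := by
  have hε : ∀ j, lowerIndicator m #{i | 0 < f i} j = if 0 < f j then 1 else 0 := fun j =>
    if_congr (hf.pos_iff_lt_card j).symm rfl rfl
  refine ⟨fun a b hab => ?_, fun j => ?_⟩
  · have := hf.1 hab
    have := hf.2 b
    simp only [Pi.sub_apply, hε]
    split_ifs <;> omega
  · have := hf.2 j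
    simp only [Pi.sub_apply, hε]
    split_ifs <;> omega

end Dominant

theorem eq_zero_of_difference_equation {R : Type*} [NonUnitalNonAssocSemiring R] {m : ℕ}
    (c : Fin m → R) (d : (Fin m → ℤ) → R) (hd0 : ∀ f, ¬ Dominant m f → d f = 0)
    (hrec : ∀ f, Dominant m f → ∀ i : Fin m,
      c i * d f = ∑ᶠ ε ∈ ISet m ((i : ℕ) + 1), d (f + ε))
    (hinit : d 0 = 0) : d = 0 := by
  funext f
  induction f using (measure fun f => (weight m f).toNat).wf.induction with
  | _ f ih =>
  by_cases hf : Dominant m f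
  swap
  · exact hd0 f hf
  have ih' : ∀ h, Dominant m h → weight m h < weight m f → d h = 0 := fun h hh hlt =>
    ih h ((Int.toNat_lt_toNat (hh.weight_nonneg.trans_lt hlt)).2 hlt)
  obtain rfl | hne := eq_or_ne f 0
  · exact hinit
  set k := #{j | 0 < f j}
  have hk0 : 0 < k := by
    obtain ⟨j, hj⟩ := Function.ne_iff.1 hne
    exact card_pos.2 ⟨j, by simpa using (hf.2 j).lt_of_ne' hj⟩
  have hkm : k ≤ m := card_le_univ _ |>.trans (Fintype.card_fin m).le
  set g := f - lowerIndicator m k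
  have hg : Dominant m g := hf.sub_lowerIndicator
  have hfg : f = g + lowerIndicator m k := (sub_add_cancel _ _).symm
  have hWg : weight m g < weight m f := by
    rw [hfg, weight_add]
    linarith [weight_lowerIndicator_pos hk0 hkm]
  have hsum : ∑ᶠ ε ∈ ISet m k, d (g + ε) = d f := by
    rw [hfg]
    refine finsum_mem_eq_single (lowerIndicator_mem_ISet hkm) fun ε hε hne => ?_
    by_cases hgε : Dominant m (g + ε)
    · refine ih' _ hgε ?_
      rw [hfg, weight_add, weight_add]
      linarith [weight_lt_weight_lowerIndicator hkm hε hne]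
    · exact hd0 _ hgε
  have := hrec g hg ⟨k - 1, by omega⟩
  rwa [Fin.val_mk, Nat.sub_add_cancel hk0, ih' g hg hWg, mul_zero, hsum, eq_comm] at this

theorem difference_equation_unique_solution_general
    (m : ℕ) (c : Fin m → ℂ) (w w' : (Fin m → ℤ) → ℂ)
    (hw0 : ∀ f, ¬ Dominant m f → w f = 0)
    (hw0' : ∀ f, ¬ Dominant m f → w' f = 0)
    (hrec : ∀ f, Dominant m f → ∀ i : Fin m,
      c i * w f = ∑ᶠ ε ∈ ISet m ((i : ℕ) + 1), w (f + ε))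
    (hrec' : ∀ f, Dominant m f → ∀ i : Fin m,
      c i * w' f = ∑ᶠ ε ∈ ISet m ((i : ℕ) + 1), w' (f + ε))
    (hinit : w 0 = w' 0) :
    w = w' := by
  refine sub_eq_zero.1 (eq_zero_of_difference_equation c (w - w') (fun f hf => ?_)
    (fun f hf i => ?_) (sub_eq_zero.2 hinit))
  · simp [hw0 f hf, hw0' f hf]
  · simp only [Pi.sub_apply, mul_sub, hrec f hf i, hrec' f hf i,
      finsum_mem_sub_distrib _ _ (ISet_finite _ _)]

/-- uniqueness of the solution of Shintani's system of difference
equations: if `w` and `w'` both vanish off the dominant tuples, both satisfy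
`c_i · w(f) = Σ_{ε ∈ I_i} w(f + ε)` for every dominant `f` and every `1 ≤ i ≤ m`
(here indexed by `i : Fin m`, the paper's index being `i + 1`), and agree at `0`,
then `w = w'`. -/
theorem difference_equation_unique_solution
    (m : ℕ) (hm : 1 ≤ m) (c : Fin m → ℂ) (w w' : (Fin m → ℤ) → ℂ)
    (hw0 : ∀ f, ¬ Dominant m f → w f = 0)
    (hw0' : ∀ f, ¬ Dominant m f → w' f = 0)
    (hrec : ∀ f, Dominant m f → ∀ i : Fin m,
      c i * w f = ∑ᶠ ε ∈ ISet m ((i : ℕ) + 1), w (f + ε))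
    (hrec' : ∀ f, Dominant m f → ∀ i : Fin m,
      c i * w' f = ∑ᶠ ε ∈ ISet m ((i : ℕ) + 1), w' (f + ε))
    (hinit : w 0 = w' 0) :
    w = w' :=
  difference_equation_unique_solution_general m c w w' hw0 hw0' hrec hrec' hinit
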